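/- Let n ≥ 6 and let C_n be the cycle graph on n vertices. Then: (i) for any two vertices u, v of C_n, the graphs C_n*u and C_n*v are isomorphic; (ii) for any vertex v, C_n*v is not isomorphic to C_n; and (iii) every graph that is Seidel complement equivalent to C_n is isomorphic either to C_n or to C_n*v (for any fixed vertex v). In other words, the Seidel complement equivalence class of C_n consists of exactly two isomorphism classes. -/

import Mathlib

/-!
For `u ≠ w` one has `(G*w)*u = G*u` up to relabelling by the transposition `(u w)`, and `*v`
is an involution; hence every graph Seidel equivalent to `G` is isomorphic to `G` or to some
`G*u`. For the cycle, rotations act transitively on vertices, so all `Cₙ*u` are isomorphic.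
Finally `Cₙ*v ≇ Cₙ`: in `Cₙ*v` the vertex `v + 1` is adjacent to `v`, `v + 3` and `v + 4`,
while every vertex of `Cₙ` has only two neighbours.
-/

universe u

/-- The Seidel complement of `G` at `v`: adjacency between the open neighborhood of `v`
and the set of vertices different from `v` and not adjacent to `v` is complemented,
all other adjacencies are unchanged. -/
def seidelCompl {V : Type u} (G : SimpleGraph V) (v : V) : SimpleGraph V where
  Adj x y := x ≠ y ∧
    Xor' (G.Adj x y)
      ((G.Adj v x ∧ ¬ G.Adj v y ∧ y ≠ v) ∨ (G.Adj v y ∧ ¬ G.Adj v x ∧ x ≠ v))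
  symm := ⟨by
    rintro x y ⟨hxy, h⟩
    refine ⟨hxy.symm, ?_⟩
    have h1 : G.Adj x y ↔ G.Adj y x := G.adj_comm x y
    unfold Xor' at h ⊢
    unfold Xor at h ⊢
    tauto⟩
  loopless := ⟨fun x h => h.1 rfl⟩

/-- `G` and `H` are Seidel complement equivalent: some finite sequence of Seidel
complementations applied to `G` yields a graph isomorphic to `H`. -/
def SeidelEquiv {V W : Type u} (G : SimpleGraph V) (H : SimpleGraph W) : Prop :=
  ∃ l : List V, Nonempty ((l.foldl seidelCompl G) ≃g H)

open SimpleGraph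

section Seidel

variable {V W : Type*} (G : SimpleGraph V)

theorem seidelCompl_adj {v x y : V} : (seidelCompl G v).Adj x y ↔ x ≠ y ∧
    Xor (G.Adj x y) ((G.Adj v x ∧ ¬ G.Adj v y ∧ y ≠ v) ∨ (G.Adj v y ∧ ¬ G.Adj v x ∧ x ≠ v)) :=
  Iff.rfl

theorem seidelCompl_adj_self_right (v x : V) : (seidelCompl G v).Adj x v ↔ G.Adj x v := by
  have hne : G.Adj x v → x ≠ v := G.ne_of_adj
  simp only [seidelCompl_adj, xor_def, G.irrefl]
  tauto

theorem seidelCompl_adj_of_adj_of_not_adj {v x y : V} (hx : G.Adj v x) (hy : ¬ G.Adj v y)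
    (hyv : y ≠ v) : (seidelCompl G v).Adj x y ↔ ¬ G.Adj x y := by
  have hxy : x ≠ y := by rintro rfl; exact hy hx
  simp only [seidelCompl_adj, xor_def, hx, hy]
  tauto

theorem seidelCompl_seidelCompl_self (v : V) : seidelCompl (seidelCompl G v) v = G := by
  ext x y
  simp only [seidelCompl_adj, xor_def]
  grind [G.adj_comm, G.irrefl]

/-- Away from `u` and `v`, both sides complement `xy` exactly when `u` is adjacent to exactly
one of `x`, `y`. -/
theorem seidelCompl_seidelCompl_of_ne [DecidableEq V] {u v : V} (huv : u ≠ v) :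
    seidelCompl (seidelCompl G v) u = (seidelCompl G u).comap (Equiv.swap u v) := by
  ext x y
  simp only [comap_adj, Equiv.swap_apply_def]
  split_ifs <;> subst_vars <;> simp only [seidelCompl_adj, xor_def] <;>
    grind [G.adj_comm, G.irrefl]

theorem nonempty_iso_or_nonempty_iso_seidelCompl_seidelCompl (u w : V) :
    Nonempty (seidelCompl (seidelCompl G u) w ≃g G) ∨
      Nonempty (seidelCompl (seidelCompl G u) w ≃g seidelCompl G w) := by
  classical
  rcases eq_or_ne w u with rfl | hwu
  · rw [seidelCompl_seidelCompl_self]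
    exact .inl ⟨Iso.refl⟩
  · rw [seidelCompl_seidelCompl_of_ne G hwu]
    exact .inr ⟨Iso.comap _ _⟩

variable {G} {G' : SimpleGraph W}

def seidelComplIso (e : G ≃g G') (v : V) : seidelCompl G v ≃g seidelCompl G' (e v) where
  toEquiv := e.toEquiv
  map_rel_iff' {a b} := by
    change (seidelCompl G' (e v)).Adj (e a) (e b) ↔ _
    simp only [seidelCompl_adj, e.map_adj_iff, ne_eq, EmbeddingLike.apply_eq_iff_eq]

theorem foldl_seidelCompl_nonempty_iso {K : SimpleGraph V} (l : List V)
    (hK : Nonempty (K ≃g G) ∨ ∃ u, Nonempty (K ≃g seidelCompl G u)) :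
    Nonempty (l.foldl seidelCompl K ≃g G) ∨
      ∃ u, Nonempty (l.foldl seidelCompl K ≃g seidelCompl G u) := by
  induction l generalizing K with
  | nil => exact hK
  | cons w l ih =>
    apply ih
    rcases hK with ⟨⟨e⟩⟩ | ⟨u, ⟨e⟩⟩
    · exact .inr ⟨e w, ⟨seidelComplIso e w⟩⟩
    · rcases nonempty_iso_or_nonempty_iso_seidelCompl_seidelCompl G u (e w) with ⟨⟨f⟩⟩ | ⟨⟨f⟩⟩
      · exact .inl ⟨(seidelComplIso e w).trans f⟩
      · exact .inr ⟨e w, ⟨(seidelComplIso e w).trans f⟩⟩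

end Seidel

theorem SeidelEquiv.nonempty_iso_or_nonempty_iso_seidelCompl {V W : Type u}
    {G : SimpleGraph V} {H : SimpleGraph W} (h : SeidelEquiv G H) :
    Nonempty (H ≃g G) ∨ ∃ u, Nonempty (H ≃g seidelCompl G u) := by
  obtain ⟨l, ⟨e⟩⟩ := h
  rcases foldl_seidelCompl_nonempty_iso l (.inl ⟨Iso.refl⟩) with ⟨⟨f⟩⟩ | ⟨u, ⟨f⟩⟩
  · exact .inl ⟨e.symm.trans f⟩
  · exact .inr ⟨u, ⟨e.symm.trans f⟩⟩

theorem SimpleGraph.Iso.encard_neighborSet {V W : Type*} {G : SimpleGraph V}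
    {G' : SimpleGraph W} (f : G ≃g G') (v : V) :
    (G'.neighborSet (f v)).encard = (G.neighborSet v).encard := by
  rw [← f.image_neighborSet]
  exact f.injective.injOn.encard_image

section Cycle

open Fin.CommRing

variable {n : ℕ}

def cycleGraphAddRight (a : Fin (n + 2)) : cycleGraph (n + 2) ≃g cycleGraph (n + 2) where
  toEquiv := Equiv.addRight a
  map_rel_iff' := by simp [cycleGraph_adj]

theorem nonempty_iso_seidelCompl_cycleGraph (u w : Fin (n + 2)) :
    Nonempty (seidelCompl (cycleGraph (n + 2)) u ≃g seidelCompl (cycleGraph (n + 2)) w) := by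
  have h : cycleGraphAddRight (w - u) u = w := add_sub_cancel u w
  exact ⟨h ▸ seidelComplIso (cycleGraphAddRight (w - u)) u⟩

theorem encard_neighborSet_cycleGraph_le_two (v : Fin (n + 2)) :
    ((cycleGraph (n + 2)).neighborSet v).encard ≤ 2 := by
  rw [cycleGraph_neighborSet]
  calc ({v - 1, v + 1} : Set (Fin (n + 2))).encard ≤ ({v + 1} : Set (Fin (n + 2))).encard + 1 :=
        Set.encard_insert_le _ _
    _ = 2 := by rw [Set.encard_singleton]; rfl

theorem Fin.natCast_ne_zero_of_lt [NeZero n] {k : ℕ} (hk0 : k ≠ 0) (hk : k < n) :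
    (k : Fin n) ≠ 0 :=
  fun h => hk0 (Nat.eq_zero_of_dvd_of_lt (Fin.natCast_eq_zero.mp h) hk)

theorem add_natCast_ne_add_natCast (v : Fin (n + 2)) {a b : ℕ} (hab : a < b) (hb : b < n + 2) :
    v + a ≠ v + b := fun h =>
  Fin.natCast_ne_zero_of_lt (n := n + 2) (k := b - a) (by omega) (by omega)
    (by rw [Nat.cast_sub hab.le]; linear_combination -h)

theorem cycleGraph_not_adj_add_natCast (v : Fin (n + 2)) {a b : ℕ} (hab : a + 2 ≤ b)
    (hb : b ≤ a + n) : ¬ (cycleGraph (n + 2)).Adj (v + a) (v + b) := by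
  rw [cycleGraph_adj]
  rintro (h | h)
  · exact Fin.natCast_ne_zero_of_lt (n := n + 2) (k := b - a + 1) (by omega) (by omega)
      (by rw [Nat.cast_add, Nat.cast_sub (by omega)]; linear_combination -h)
  · exact Fin.natCast_ne_zero_of_lt (n := n + 2) (k := b - a - 1) (by omega) (by omega)
      (by rw [Nat.cast_sub (by omega), Nat.cast_sub (by omega)]; linear_combination h)

theorem three_le_encard_neighborSet_seidelCompl_cycleGraph (v : Fin (n + 6)) :
    3 ≤ ((seidelCompl (cycleGraph (n + 6)) v).neighborSet (v + 1)).encard := by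
  set C := cycleGraph (n + 6)
  have hv1 : C.Adj v (v + 1) := by rw [cycleGraph_adj]; right; ring
  have hv3 : ¬ C.Adj v (v + 3) := by
    simpa using cycleGraph_not_adj_add_natCast v (a := 0) (b := 3) (by omega) (by omega)
  have hv4 : ¬ C.Adj v (v + 4) := by
    simpa using cycleGraph_not_adj_add_natCast v (a := 0) (b := 4) (by omega) (by omega)
  have h13 : ¬ C.Adj (v + 1) (v + 3) := by
    simpa using cycleGraph_not_adj_add_natCast v (a := 1) (b := 3) (by omega) (by omega)
  have h14 : ¬ C.Adj (v + 1) (v + 4) := by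
    simpa using cycleGraph_not_adj_add_natCast v (a := 1) (b := 4) (by omega) (by omega)
  have ne03 : v ≠ v + 3 := by
    simpa using add_natCast_ne_add_natCast v (a := 0) (b := 3) (by omega) (by omega)
  have ne04 : v ≠ v + 4 := by
    simpa using add_natCast_ne_add_natCast v (a := 0) (b := 4) (by omega) (by omega)
  have ne34 : v + 3 ≠ v + 4 := by
    simpa using add_natCast_ne_add_natCast v (a := 3) (b := 4) (by omega) (by omega)
  have hsub : {v, v + 3, v + 4} ⊆ (seidelCompl C v).neighborSet (v + 1) := by
    simp only [Set.insert_subset_iff, Set.singleton_subset_iff, mem_neighborSet,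
      seidelCompl_adj_self_right, seidelCompl_adj_of_adj_of_not_adj C hv1 hv3 ne03.symm,
      seidelCompl_adj_of_adj_of_not_adj C hv1 hv4 ne04.symm]
    exact ⟨hv1.symm, h13, h14⟩
  calc (3 : ℕ∞) = ({v, v + 3, v + 4} : Set (Fin (n + 6))).encard :=
        (Set.encard_eq_three.mpr ⟨_, _, _, ne03, ne04, ne34, rfl⟩).symm
    _ ≤ _ := Set.encard_le_encard hsub

theorem not_nonempty_iso_seidelCompl_cycleGraph (v : Fin (n + 6)) :
    ¬ Nonempty (seidelCompl (cycleGraph (n + 6)) v ≃g cycleGraph (n + 6)) := by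
  rintro ⟨f⟩
  have h3 := three_le_encard_neighborSet_seidelCompl_cycleGraph v
  rw [← f.encard_neighborSet] at h3
  have h2 := encard_neighborSet_cycleGraph_le_two (n := n + 4) (f (v + 1))
  exact absurd (h3.trans h2) (by decide)

end Cycle

/-- For `n ≥ 6`, the Seidel complement equivalence class of the cycle `Cₙ` consists of
exactly two isomorphism classes: (i) all the graphs `Cₙ*u` are pairwise isomorphic,
(ii) `Cₙ*v` is not isomorphic to `Cₙ`, and (iii) every graph Seidel complement
equivalent to `Cₙ` is isomorphic to `Cₙ` or to `Cₙ*v`. -/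
theorem cycle_seidel_class (n : ℕ) (hn : 6 ≤ n) :
    (∀ u v : Fin n,
      Nonempty (seidelCompl (SimpleGraph.cycleGraph n) u ≃g
        seidelCompl (SimpleGraph.cycleGraph n) v)) ∧
    (∀ v : Fin n,
      ¬ Nonempty (seidelCompl (SimpleGraph.cycleGraph n) v ≃g SimpleGraph.cycleGraph n)) ∧
    (∀ (W : Type) (H : SimpleGraph W), SeidelEquiv (SimpleGraph.cycleGraph n) H →
      ∀ v : Fin n, Nonempty (H ≃g SimpleGraph.cycleGraph n) ∨
        Nonempty (H ≃g seidelCompl (SimpleGraph.cycleGraph n) v)) := by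
  obtain ⟨m, rfl⟩ : ∃ m, n = m + 6 := ⟨n - 6, by omega⟩
  refine ⟨nonempty_iso_seidelCompl_cycleGraph, not_nonempty_iso_seidelCompl_cycleGraph, ?_⟩
  intro W H hH v
  rcases hH.nonempty_iso_or_nonempty_iso_seidelCompl with hC | ⟨u, ⟨e⟩⟩
  · exact .inl hC
  · obtain ⟨f⟩ := nonempty_iso_seidelCompl_cycleGraph u v
    exact .inr ⟨e.trans f⟩
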